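/- For every r > 0 there exist p ∈ (0,1) and β ∈ (0,1) such that H(β) + r·log₂( p·(1 − (1−β)³) + (1−p)·(7/8) ) > 0, where H(β) = −β·log₂ β − (1−β)·log₂(1−β) is the binary entropy function. -/

import Mathlib

/-!
Take `p = β = 1 - ε`. The satisfaction probability of a clause is then at least `1 - ε`, so the
clause term costs at most `2 r ε` nats, whereas the entropy is at least `ε log ε⁻¹`. Choosing
`ε = exp (-(2 r + 1))` leaves a margin of `ε`.
-/

/-- The binary entropy function `H(β) = -β log₂ β - (1-β) log₂ (1-β)`. -/
noncomputable def binH (β : ℝ) : ℝ :=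
  -β * Real.logb 2 β - (1 - β) * Real.logb 2 (1 - β)

open Real

lemma binH_eq_binEntropy_div_log_two (β : ℝ) : binH β = binEntropy β / log 2 := by
  simp only [binH, binEntropy, logb, log_inv]
  ring

lemma mul_log_inv_le_binEntropy {ε : ℝ} (h₀ : 0 ≤ ε) (h₁ : ε ≤ 1) :
    ε * log ε⁻¹ ≤ binEntropy ε := by
  have h : 0 ≤ (1 - ε) * log (1 - ε)⁻¹ := by
    rw [log_inv, mul_neg, ← neg_mul]
    exact negMulLog_nonneg (sub_nonneg.2 h₁) (by linarith)
  exact le_add_of_nonneg_right h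

lemma neg_two_mul_le_log_one_sub {ε : ℝ} (h₀ : 0 ≤ ε) (h : ε ≤ 1 / 2) :
    -2 * ε ≤ log (1 - ε) :=
  calc -2 * ε ≤ -ε / (1 - ε) := by
        rw [le_div_iff₀ (by linarith)]
        nlinarith
    _ = 1 - (1 - ε)⁻¹ := by
        field_simp [show 1 - ε ≠ 0 by linarith]
        ring
    _ ≤ log (1 - ε) := one_sub_inv_le_log_of_pos (by linarith)

lemma one_sub_le_clause_satisfaction {ε : ℝ} (h₀ : 0 ≤ ε) (h₁ : ε ≤ 1) :
    1 - ε ≤ (1 - ε) * (1 - (1 - (1 - ε)) ^ 3) + (1 - (1 - ε)) * (7 / 8) := by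
  nlinarith [mul_nonneg h₀ (mul_nonneg h₀ (sub_nonneg.2 h₁)), mul_le_mul h₁ h₁ h₀ zero_le_one]

lemma exp_neg_two_mul_add_one_le_half {r : ℝ} (hr : 0 ≤ r) : exp (-(2 * r + 1)) ≤ 1 / 2 := by
  have h : exp (-(2 * r + 1)) ≤ (exp 1)⁻¹ := by
    rw [← exp_neg]
    exact exp_le_exp.2 (by linarith)
  have h₂ : 2 < exp 1 := by simpa [one_add_one_eq_two] using add_one_lt_exp one_ne_zero
  linarith [(inv_lt_inv₀ (exp_pos 1) two_pos).2 h₂]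

/-- For every `r > 0` there exist `p ∈ (0,1)` and `β ∈ (0,1)` such that
`H(β) + r log₂( p (1 - (1-β)³) + (1-p) (7/8) ) > 0`. -/
theorem exists_bias_first_moment_positive (r : ℝ) (hr : 0 < r) :
    ∃ p ∈ Set.Ioo (0 : ℝ) 1, ∃ β ∈ Set.Ioo (0 : ℝ) 1,
      0 < binH β + r * Real.logb 2 (p * (1 - (1 - β) ^ 3) + (1 - p) * (7 / 8)) := by
  set ε := exp (-(2 * r + 1))
  have hε₀ : 0 < ε := exp_pos _
  have hε_half : ε ≤ 1 / 2 := exp_neg_two_mul_add_one_le_half hr.le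
  refine ⟨1 - ε, ⟨by linarith, by linarith⟩, 1 - ε, ⟨by linarith, by linarith⟩, ?_⟩
  have h_entropy : ε * (2 * r + 1) ≤ binEntropy ε := by
    simpa [ε, log_inv, log_exp] using mul_log_inv_le_binEntropy hε₀.le (by linarith)
  have h_clause : -2 * ε ≤ log ((1 - ε) * (1 - (1 - (1 - ε)) ^ 3) + (1 - (1 - ε)) * (7 / 8)) :=
    (neg_two_mul_le_log_one_sub hε₀.le hε_half).trans
      (log_le_log (by linarith) (one_sub_le_clause_satisfaction hε₀.le (by linarith)))
  rw [binH_eq_binEntropy_div_log_two, binEntropy_one_sub, logb, mul_div_assoc', ← add_div]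
  refine div_pos ?_ (log_pos one_lt_two)
  nlinarith
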